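/- arXiv:math/0406179 — 4 statements merged into one kernel-verified Lean document; each statement's English description precedes it below -/
import Mathlib

section
/- Every continuous bounded map f : R → R from the closed long ray to itself is eventually constant: there exists z ∈ R such that f is constant on [z, ω₁). -/
open Set Topology
noncomputable section

/-- The first uncountable ordinal ω₁. -/
def omega1 : Ordinal := Ordinal.omega 1

/-- The closed long ray `R = W(ω₁) × [0,1)` with the lexicographic order. -/
def LongRay : Type 1 := {o : Ordinal // o < omega1} ×ₗ (Set.Ico (0:ℝ) 1)

instance : LinearOrder LongRay :=
  inferInstanceAs (LinearOrder ({o : Ordinal // o < omega1} ×ₗ (Set.Ico (0:ℝ) 1)))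

/-- The order topology on the long ray. -/
instance : TopologicalSpace LongRay := Preorder.topology LongRay
instance : OrderTopology LongRay := ⟨rfl⟩

/-- The minimum point `(0,0)` of the long ray. -/
instance : Zero LongRay :=
  ⟨toLex (⟨0, Ordinal.omega_pos 1⟩, ⟨0, by constructor <;> norm_num⟩)⟩

/-- A map `R → R` is cofinal if its image is unbounded in `R`. -/
def Cofinal (f : LongRay → LongRay) : Prop := ∀ b, ∃ x, b ≤ f x

/-- A map `R → R` is bounded if its image has an upper bound in `R`. -/
def BddMap (f : LongRay → LongRay) : Prop := ∃ b, ∀ x, f x ≤ b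

/-!
Countably many points of the long ray have a common upper bound, so `atTop` is closed under
countable intersections, and two closed unbounded sets meet. Hence for `c < d` the closed sets
`f ⁻¹' Iic c` and `f ⁻¹' Ici d` cannot both be unbounded: eventually `c < f` or eventually
`f < d`. Below a bound of `f`, the countably many points with rational second coordinate
separate any two values, so these countably many alternatives hold simultaneously on a tail,
where `f` can then take only one value.
-/

open Filter

instance Filter.countableInterFilter_prod {α β : Type*} {l : Filter α} {m : Filter β}
    [CountableInterFilter l] [CountableInterFilter m] : CountableInterFilter (l ×ˢ m) :=
  inferInstanceAs (CountableInterFilter (comap Prod.fst l ⊓ comap Prod.snd m))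

theorem Ordinal.countable_Iio_of_lt_omega_one {o : Ordinal} (ho : o < Ordinal.omega 1) :
    (Iio o).Countable := by
  rw [← Cardinal.le_aleph0_iff_set_countable, Cardinal.mk_Iio_ordinal, Cardinal.lift_le_aleph0,
    ← Cardinal.lt_aleph_one_iff, ← Cardinal.lt_omega_iff_card_lt]
  exact ho

theorem Filter.eventually_prod_eq_of_countable_dense {α β : Type*} [LinearOrder β]
    {l : Filter α} [CountableInterFilter l] {f : α → β} {D : Set β} (hD : D.Countable)
    (hsep : ∀ x y, f x < f y → ∃ c ∈ D, ∃ d ∈ D, f x < c ∧ c < d ∧ d < f y)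
    (h : ∀ c ∈ D, ∀ d ∈ D, c < d → (∀ᶠ x in l, c < f x) ∨ ∀ᶠ x in l, f x < d) :
    ∀ᶠ p in l ×ˢ l, f p.1 = f p.2 := by
  let Sep (x y : α) : Prop := ∀ c ∈ D, ∀ d ∈ D, c < d → c < f x ∨ f y < d
  have hSep : ∀ᶠ p in l ×ˢ l, Sep p.1 p.2 ∧ Sep p.2 p.1 := by
    simp only [Sep, eventually_and, eventually_countable_ball hD, eventually_imp_distrib_left]
    refine ⟨fun c hc d hd hcd => ?_, fun c hc d hd hcd => ?_⟩ <;>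
      rcases h c hc d hd hcd with h | h
    exacts [(tendsto_fst.eventually h).mono fun _ => .inl,
      (tendsto_snd.eventually h).mono fun _ => .inr,
      (tendsto_snd.eventually h).mono fun _ => .inl,
      (tendsto_fst.eventually h).mono fun _ => .inr]
  have not_lt_of_sep {x y : α} (hxy : Sep x y) : ¬ f x < f y := fun hlt => by
    obtain ⟨c, hc, d, hd, hxc, hcd, hdy⟩ := hsep x y hlt
    rcases hxy c hc d hd hcd with h | h
    exacts [h.not_gt hxc, h.not_gt hdy]
  exact hSep.mono fun p hp =>
    le_antisymm (not_lt.1 (not_lt_of_sep hp.2)) (not_lt.1 (not_lt_of_sep hp.1))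

namespace LongRay

def fst (x : LongRay) : Ordinal := ((ofLex x).1 : Ordinal)

def snd (x : LongRay) : ℝ := ((ofLex x).2 : ℝ)

theorem fst_lt_omega1 (x : LongRay) : fst x < omega1 := (ofLex x).1.2

theorem snd_mem (x : LongRay) : snd x ∈ Ico (0 : ℝ) 1 := (ofLex x).2.2

def mk (o : Ordinal) (ho : o < omega1) (t : ℝ) (ht : t ∈ Ico (0 : ℝ) 1) : LongRay :=
  toLex (⟨o, ho⟩, ⟨t, ht⟩)

theorem lt_iff {x y : LongRay} : x < y ↔ fst x < fst y ∨ fst x = fst y ∧ snd x < snd y := by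
  simp only [fst, snd, Subtype.coe_lt_coe, ← Subtype.ext_iff]
  exact Prod.Lex.lt_iff

theorem fst_mono : Monotone fst := fun _ _ h =>
  Prod.Lex.monotone_fst_ofLex (α := {o : Ordinal // o < omega1}) (β := Ico (0 : ℝ) 1) h

theorem lt_of_fst_lt {x y : LongRay} (h : fst x < fst y) : x < y := lt_iff.2 (Or.inl h)

theorem mk_zero_le_iff {o ho} {x : LongRay} :
    mk o ho 0 ⟨le_rfl, one_pos⟩ ≤ x ↔ o ≤ fst x := by
  refine ⟨fun h => fst_mono h, fun h => ?_⟩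
  rw [← not_lt, lt_iff]
  rintro (h' | ⟨-, h'⟩)
  · exact h'.not_ge h
  · exact h'.not_ge (snd_mem x).1

theorem injective_fst_snd : Function.Injective fun x : LongRay => (fst x, snd x) := by
  intro x y h
  simp only [Prod.mk.injEq, fst, snd] at h
  exact ofLex.injective (Prod.ext (Subtype.ext h.1) (Subtype.ext h.2))

theorem exists_forall_fst_lt {ι : Type*} [Countable ι] (u : ι → LongRay) :
    ∃ b, ∀ i, fst (u i) < fst b := by
  have hsucc : ∀ i, fst (u i) + 1 < omega1 := fun i =>
    (Cardinal.isSuccLimit_omega 1).add_one_lt (fst_lt_omega1 (u i))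
  refine ⟨mk _ (Ordinal.iSup_lt_omega_one hsucc) 0 ⟨le_rfl, one_pos⟩, fun i => ?_⟩
  exact (Order.lt_add_one_iff.2 le_rfl).trans_le (Ordinal.le_iSup (fun i => fst (u i) + 1) i)

instance countableInterFilter_atTop : CountableInterFilter (atTop : Filter LongRay) where
  countable_sInter_mem S hS hmem := by
    have := hS.to_subtype
    choose z hz using fun s : S => mem_atTop_sets.1 (hmem s s.2)
    obtain ⟨b, hb⟩ := exists_forall_fst_lt z
    exact mem_atTop_sets.2
      ⟨b, fun x hx s hs => hz ⟨s, hs⟩ x ((lt_of_fst_lt (hb _)).le.trans hx)⟩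

theorem exists_isLUB_of_strictMono_fst {u : ℕ → LongRay} (hu : StrictMono (fst ∘ u)) :
    ∃ x, IsLUB (range u) x := by
  refine ⟨mk (⨆ n, fst (u n)) (Ordinal.iSup_lt_omega_one fun n => fst_lt_omega1 (u n)) 0
    ⟨le_rfl, one_pos⟩, ?_, fun w hw => ?_⟩
  · rintro _ ⟨n, rfl⟩
    refine (lt_of_fst_lt ?_).le
    exact (hu n.lt_succ_self).trans_le (Ordinal.le_iSup (fun n => fst (u n)) (n + 1))
  · exact mk_zero_le_iff.2 (Ordinal.iSup_le fun n => fst_mono (hw ⟨n, rfl⟩))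

theorem exists_mem_fst_lt_of_frequently {S : Set LongRay} (hS : ∃ᶠ x in atTop, x ∈ S)
    (z : LongRay) : ∃ x ∈ S, fst z < fst x := by
  obtain ⟨b, hb⟩ := exists_forall_fst_lt fun _ : Unit => z
  obtain ⟨x, hbx, hx⟩ := frequently_atTop.1 hS b
  exact ⟨x, hx, (hb ()).trans_le (fst_mono hbx)⟩

/-- Alternating between `A` and `B` along a sequence with strictly increasing first coordinate
gives a limit point `(λ, 0)` of both. -/
theorem inter_nonempty_of_frequently {A B : Set LongRay} (hA : IsClosed A) (hB : IsClosed B)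
    (hA' : ∃ᶠ x in atTop, x ∈ A) (hB' : ∃ᶠ x in atTop, x ∈ B) : (A ∩ B).Nonempty := by
  choose a haA ha using exists_mem_fst_lt_of_frequently hA'
  choose b hbB hb using exists_mem_fst_lt_of_frequently hB'
  let u : ℕ → LongRay := fun n => Nat.rec 0 (fun k x => if Even k then a x else b x) n
  have hu : ∀ n, fst (u n) < fst (u (n + 1)) := by
    intro n
    show fst (u n) < fst (if Even n then a (u n) else b (u n))
    split_ifs
    exacts [ha _, hb _]
  have huA : ∀ k, u (2 * k + 1) ∈ A := fun k => by
    show (if Even (2 * k) then a (u (2 * k)) else b (u (2 * k))) ∈ A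
    rw [if_pos (even_two_mul k)]
    exact haA _
  have huB : ∀ k, u (2 * k + 2) ∈ B := fun k => by
    show (if Even (2 * k + 1) then a (u (2 * k + 1)) else b (u (2 * k + 1))) ∈ B
    rw [if_neg (Nat.not_even_two_mul_add_one k)]
    exact hbB _
  obtain ⟨x, hx⟩ := exists_isLUB_of_strictMono_fst (strictMono_nat_of_lt_succ hu)
  have hlim := tendsto_atTop_isLUB
    (strictMono_nat_of_lt_succ fun n => lt_of_fst_lt (hu n)).monotone hx
  exact ⟨x,
    hA.mem_of_frequently_of_tendsto (frequently_atTop.2 fun n => ⟨_, by omega, huA n⟩) hlim,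
    hB.mem_of_frequently_of_tendsto (frequently_atTop.2 fun n => ⟨_, by omega, huB n⟩) hlim⟩

theorem eventually_lt_or_eventually_gt {β : Type*} [LinearOrder β] [TopologicalSpace β]
    [OrderClosedTopology β] {f : LongRay → β} (hf : Continuous f) {c d : β} (hcd : c < d) :
    (∀ᶠ x in atTop, c < f x) ∨ ∀ᶠ x in atTop, f x < d := by
  by_contra! h
  obtain ⟨x, hxc, hdx⟩ := inter_nonempty_of_frequently (isClosed_le hf continuous_const)
    (isClosed_le continuous_const hf) h.1 h.2
  exact (hcd.trans_le hdx).not_ge hxc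

def rationalPoints (o : Ordinal) : Set LongRay :=
  {x | fst x ≤ o ∧ snd x ∈ range ((↑) : ℚ → ℝ)}

theorem countable_rationalPoints {o : Ordinal} (ho : o < omega1) :
    (rationalPoints o).Countable := by
  refine MapsTo.countable_of_injOn (t := Iic o ×ˢ range ((↑) : ℚ → ℝ))
    (fun x hx => mk_mem_prod hx.1 hx.2) injective_fst_snd.injOn ?_
  rw [← Iio_insert]
  exact ((Ordinal.countable_Iio_of_lt_omega_one ho).insert o).prod (countable_range _)

theorem exists_rationalPoints_between {o : Ordinal} {x y : LongRay} (hxy : x < y)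
    (hy : fst y ≤ o) :
    ∃ c ∈ rationalPoints o, ∃ d ∈ rationalPoints o, x < c ∧ c < d ∧ d < y := by
  obtain ⟨r, hxr, hr1, hry⟩ : ∃ r, snd x < r ∧ r ≤ 1 ∧
      ∀ t (ht : t ∈ Ico (0 : ℝ) 1), t < r → mk (fst x) (fst_lt_omega1 x) t ht < y := by
    rcases lt_iff.1 hxy with h | ⟨h, h'⟩
    · exact ⟨1, (snd_mem x).2, le_rfl, fun t ht _ => lt_of_fst_lt h⟩
    · exact ⟨snd y, h', (snd_mem y).2.le, fun t ht htr => lt_iff.2 (Or.inr ⟨h, htr⟩)⟩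
  obtain ⟨q₁, hxq₁, hq₁r⟩ := exists_rat_btwn hxr
  obtain ⟨q₂, hq₁q₂, hq₂r⟩ := exists_rat_btwn hq₁r
  have hq₁ : (q₁ : ℝ) ∈ Ico 0 1 := ⟨(snd_mem x).1.trans hxq₁.le, hq₁r.trans_le hr1⟩
  have hq₂ : (q₂ : ℝ) ∈ Ico 0 1 := ⟨hq₁.1.trans hq₁q₂.le, hq₂r.trans_le hr1⟩
  have hfst : fst x ≤ o := (fst_mono hxy.le).trans hy
  exact ⟨mk _ _ q₁ hq₁, ⟨hfst, q₁, rfl⟩, mk _ _ q₂ hq₂, ⟨hfst, q₂, rfl⟩,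
    lt_iff.2 (Or.inr ⟨rfl, hxq₁⟩), lt_iff.2 (Or.inr ⟨rfl, hq₁q₂⟩), hry _ hq₂ hq₂r⟩

end LongRay

open LongRay in
/-- Every continuous bounded map `R → R` is eventually constant. -/
theorem eventually_constant_of_bddMap (f : LongRay → LongRay)
    (hf : Continuous f) (hb : BddMap f) :
    ∃ z : LongRay, ∀ x, z ≤ x → f x = f z := by
  obtain ⟨b, hb⟩ := hb
  have hconst : ∀ᶠ p in atTop ×ˢ atTop, f p.1 = f p.2 :=
    eventually_prod_eq_of_countable_dense (countable_rationalPoints (fst_lt_omega1 b))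
      (fun x y hxy => exists_rationalPoints_between hxy (fst_mono (hb y)))
      fun c _ d _ hcd => eventually_lt_or_eventually_gt hf hcd
  rw [prod_atTop_atTop_eq, eventually_atTop_prod_self] at hconst
  obtain ⟨z, hz⟩ := hconst
  exact ⟨z, fun x hx => hz x z hx le_rfl⟩
end
end

section
/- If f : L → L² is continuous and the set { x ∈ L₊ : f(x) = (x,x) } is cofinal in L₊ and the set { y ∈ L₋ : f(y) = (−y,−y) } is cofinal in L₋ (where −y denotes the point of L₊ corresponding to y ∈ L₋), then f is not injective. -/
open Set Topology
noncomputable section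

/-- The long line `L`: two copies `L₋, L₊` of the closed long ray glued at `0`,
with the order reversed on `L₋` (modelled as the lexicographic sum of the strictly
negative part, with dual order, followed by the nonnegative ray). -/
def LongLine : Type 1 := ({x : LongRay // 0 < x}ᵒᵈ) ⊕ₗ LongRay

instance : LinearOrder LongLine :=
  inferInstanceAs (LinearOrder (({x : LongRay // 0 < x}ᵒᵈ) ⊕ₗ LongRay))

instance : TopologicalSpace LongLine := Preorder.topology LongLine
instance : OrderTopology LongLine := ⟨rfl⟩

/-- The canonical inclusion of the long ray onto `L₊ ⊆ L`. -/
def LongLine.pos (x : LongRay) : LongLine := toLex (Sum.inr x)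

/-- The canonical inclusion of the long ray onto `L₋ ⊆ L` (order reversed). -/
def LongLine.neg (x : LongRay) : LongLine :=
  if h : 0 < x then toLex (Sum.inl (OrderDual.toDual ⟨x, h⟩)) else toLex (Sum.inr 0)

/-- The reflection `y ↦ -y` of the long line exchanging `L₋` and `L₊`. -/
def LongLine.negate (z : LongLine) : LongLine :=
  match ofLex z with
  | Sum.inl x => LongLine.pos (OrderDual.ofDual x).1
  | Sum.inr x => LongLine.neg x

/-- The gluing point `0` of the long line. -/
def LongLine.zero : LongLine := LongLine.pos 0

/-!
The sets `S = {r | f (+r) = (+r, +r)}` and `T = {r | f (-r) = (+r, +r)}` are closed and unbounded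
in the long ray. Two closed unbounded subsets of the long ray meet: picking points of `S` and `T`
alternately, with strictly increasing ordinal parts, gives interleaved sequences with a common
supremum `a` (a countable supremum of countable ordinals is countable), lying in both closures.
Then `f (+a) = (+a, +a) = f (-a)` although `+a ≠ -a`.
-/

theorem isLUB_range_of_le_of_le_succ {α : Type*} [Preorder α] {x w : ℕ → α} {a : α}
    (hxw : ∀ n, x n ≤ w n) (hwx : ∀ n, w n ≤ x (n + 1)) (h : IsLUB (range x) a) :
    IsLUB (range w) a := by
  refine ⟨?_, fun u hu => h.2 ?_⟩
  · rintro _ ⟨n, rfl⟩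
    exact (hwx n).trans (h.1 ⟨n + 1, rfl⟩)
  · rintro _ ⟨n, rfl⟩
    exact (hxw n).trans (hu ⟨n, rfl⟩)

theorem StrictAnti.continuous_of_ordConnected_range {α β : Type*}
    [LinearOrder α] [TopologicalSpace α] [OrderTopology α]
    [LinearOrder β] [TopologicalSpace β] [OrderTopology β]
    {f : α → β} (hf : StrictAnti f) (hc : OrdConnected (range f)) : Continuous f := by
  refine continuous_ofDual.comp (hf.dual_right.isEmbedding_of_ordConnected ?_).continuous
  rw [range_comp, Equiv.image_eq_preimage_symm]
  exact hc.dual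

namespace LongRay

theorem zero_le (r : LongRay) : (0 : LongRay) ≤ r :=
  Prod.Lex.toLex_le_toLex.mpr <| (eq_or_lt_of_le (Subtype.mk_le_mk.mpr _root_.zero_le :
    (ofLex (0 : LongRay)).1 ≤ (ofLex r).1)).symm.imp id fun h => ⟨h, (ofLex r).2.2.1⟩

theorem eq_zero_of_not_pos {r : LongRay} (h : ¬ 0 < r) : r = 0 :=
  ((zero_le r).eq_or_lt.resolve_right h).symm

def ord (r : LongRay) : Ordinal := (ofLex r).1.1

theorem ord_lt_omega1 (r : LongRay) : ord r < omega1 := (ofLex r).1.2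

def ofOrd (o : Ordinal) (ho : o < omega1) : LongRay :=
  toLex (⟨o, ho⟩, ⟨0, le_rfl, zero_lt_one⟩)

theorem ord_mono : Monotone ord := fun r s h => by
  rcases Prod.Lex.le_iff.mp h with h | ⟨h, -⟩
  · exact h.le
  · exact (congrArg Subtype.val h).le

theorem lt_of_ord_lt {r s : LongRay} (h : ord r < ord s) : r < s :=
  Prod.Lex.lt_iff.mpr (Or.inl h)

theorem ofOrd_le_iff {o : Ordinal} {ho : o < omega1} {r : LongRay} :
    ofOrd o ho ≤ r ↔ o ≤ ord r := by
  refine ⟨fun h => ord_mono h, fun h => ?_⟩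
  rcases h.lt_or_eq with h | h
  · exact (lt_of_ord_lt h).le
  · exact Prod.Lex.le_iff.mpr (Or.inr ⟨Subtype.ext h, (ofLex r).2.2.1⟩)

theorem exists_ord_lt_of_forall_exists_le {S : Set LongRay} (hS : ∀ b, ∃ s ∈ S, b ≤ s)
    (r : LongRay) : ∃ s ∈ S, ord r < ord s := by
  obtain ⟨s, hs, hle⟩ :=
    hS (ofOrd (Order.succ (ord r)) ((Cardinal.isSuccLimit_omega 1).succ_lt (ord_lt_omega1 r)))
  exact ⟨s, hs, Order.succ_le_iff.mp (ofOrd_le_iff.mp hle)⟩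

theorem isLUB_range_ofOrd_iSup {s : ℕ → LongRay} (hs : StrictMono (ord ∘ s)) :
    IsLUB (range s)
      (ofOrd (⨆ n, ord (s n)) (Ordinal.iSup_lt_omega_one fun _ => ord_lt_omega1 _)) := by
  have hbdd : BddAbove (range (ord ∘ s)) := ⟨omega1, by
    rintro _ ⟨n, rfl⟩; exact (ord_lt_omega1 _).le⟩
  refine ⟨?_, fun u hu => ofOrd_le_iff.mpr (ciSup_le fun n => ord_mono (hu ⟨n, rfl⟩))⟩
  rintro _ ⟨n, rfl⟩
  refine (lt_of_ord_lt ?_).le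
  change ord (s n) < ⨆ k, ord (s k)
  exact (hs (Nat.lt_succ_self n)).trans_le (le_ciSup hbdd (n + 1))

theorem exists_gt_mem_inter_of_isClosed {S T : Set LongRay} (hSc : IsClosed S) (hTc : IsClosed T)
    (hS : ∀ b, ∃ s ∈ S, b ≤ s) (hT : ∀ b, ∃ t ∈ T, b ≤ t) (b : LongRay) :
    ∃ a ∈ S ∩ T, b < a := by
  choose g hgS hg using exists_ord_lt_of_forall_exists_le hS
  choose k hkT hk using exists_ord_lt_of_forall_exists_le hT
  set x : ℕ → LongRay := fun n => (g ∘ k)^[n] (g b)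
  have hx_succ (n : ℕ) : x (n + 1) = g (k (x n)) := Function.iterate_succ_apply' _ _ _
  have hxS : range x ⊆ S := by
    rintro _ ⟨n, rfl⟩
    cases n with
    | zero => exact hgS b
    | succ n => exact hx_succ n ▸ hgS _
  have hxk : ∀ n, ord (x n) < ord (k (x n)) := fun n => hk _
  have hkx : ∀ n, ord (k (x n)) < ord (x (n + 1)) := fun n => hx_succ n ▸ hg _
  have hx_lub := isLUB_range_ofOrd_iSup (strictMono_nat_of_lt_succ fun n => (hxk n).trans (hkx n))
  have hkx_lub := isLUB_range_of_le_of_le_succ (fun n => (lt_of_ord_lt (hxk n)).le)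
    (fun n => (lt_of_ord_lt (hkx n)).le) hx_lub
  refine ⟨_, ⟨hSc.closure_subset_iff.mpr hxS (hx_lub.mem_closure (range_nonempty x)),
    hTc.closure_subset_iff.mpr (range_subset_iff.mpr fun n => hkT _)
      (hkx_lub.mem_closure (range_nonempty _))⟩, ?_⟩
  exact (lt_of_ord_lt (hg b)).trans_le (hx_lub.1 ⟨0, rfl⟩)

end LongRay

namespace LongLine

theorem pos_strictMono : StrictMono pos := fun _ _ h => Sum.Lex.inr_lt_inr_iff.mpr h

theorem range_pos : range pos = Ici zero := by
  ext z
  refine ⟨?_, fun hz => ?_⟩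
  · rintro ⟨x, rfl⟩
    exact pos_strictMono.monotone (LongRay.zero_le x)
  · cases z with
    | inl d => exact absurd hz Sum.Lex.not_inr_le_inl
    | inr x => exact ⟨x, rfl⟩

theorem neg_of_pos {x : LongRay} (hx : 0 < x) :
    neg x = (toLex (Sum.inl (OrderDual.toDual ⟨x, hx⟩)) : LongLine) :=
  dif_pos hx

theorem neg_zero : neg 0 = zero := dif_neg (lt_irrefl 0)

theorem neg_strictAnti : StrictAnti neg := by
  intro x y hxy
  have hy : 0 < y := (LongRay.zero_le x).trans_lt hxy
  by_cases hx : 0 < x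
  · rw [neg_of_pos hx, neg_of_pos hy]
    exact Sum.Lex.inl_lt_inl_iff.mpr hxy
  · rw [LongRay.eq_zero_of_not_pos hx, neg_zero, neg_of_pos hy]
    exact Sum.Lex.inl_lt_inr _ _

theorem range_neg : range neg = Iic zero := by
  ext z
  refine ⟨?_, fun hz => ?_⟩
  · rintro ⟨x, rfl⟩
    exact neg_zero ▸ neg_strictAnti.antitone (LongRay.zero_le x)
  · cases z with
    | inl d => exact ⟨_, (neg_of_pos (OrderDual.ofDual d).2).trans rfl⟩
    | inr x =>
      obtain rfl : x = 0 := le_antisymm (Sum.Lex.inr_le_inr_iff.mp hz) (LongRay.zero_le x)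
      exact ⟨0, neg_zero⟩

theorem negate_neg (x : LongRay) : negate (neg x) = pos x := by
  by_cases hx : 0 < x
  · rw [neg_of_pos hx]
    rfl
  · rw [LongRay.eq_zero_of_not_pos hx, neg_zero]
    exact neg_zero

theorem neg_ne_pos {x : LongRay} (hx : 0 < x) : neg x ≠ pos x := by
  rw [neg_of_pos hx]
  exact Sum.inl_ne_inr

theorem continuous_pos : Continuous pos :=
  (pos_strictMono.isEmbedding_of_ordConnected (range_pos ▸ ordConnected_Ici)).continuous

theorem continuous_neg : Continuous neg :=
  neg_strictAnti.continuous_of_ordConnected_range (range_neg ▸ ordConnected_Iic)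

end LongLine

/-- If `f : L → L²` is continuous, `{x ∈ L₊ : f x = (x,x)}` is cofinal in `L₊` and
`{y ∈ L₋ : f y = (-y,-y)}` is cofinal in `L₋`, then `f` is not injective. -/
theorem not_injective_of_cofinal_diagonals
    (f : LongLine → LongLine × LongLine) (hf : Continuous f)
    (hpos : ∀ b : LongLine, ∃ x, LongLine.zero ≤ x ∧ b ≤ x ∧ f x = (x, x))
    (hneg : ∀ b : LongLine, ∃ y, y ≤ LongLine.zero ∧ y ≤ b ∧
      f y = (LongLine.negate y, LongLine.negate y)) :
    ¬ Function.Injective f := by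
  intro hinj
  open LongLine in
  let S : Set LongRay := {r | f (pos r) = (pos r, pos r)}
  let T : Set LongRay := {r | f (neg r) = (pos r, pos r)}
  have hS : ∀ b, ∃ r ∈ S, b ≤ r := fun b => by
    obtain ⟨x, hx0, hbx, hfx⟩ := hpos (pos b)
    obtain ⟨r, rfl⟩ : x ∈ range pos := range_pos ▸ hx0
    exact ⟨r, hfx, pos_strictMono.le_iff_le.mp hbx⟩
  have hT : ∀ b, ∃ r ∈ T, b ≤ r := fun b => by
    obtain ⟨y, hy0, hyb, hfy⟩ := hneg (neg b)
    obtain ⟨r, rfl⟩ : y ∈ range neg := range_neg ▸ hy0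
    exact ⟨r, by rwa [negate_neg] at hfy, neg_strictAnti.le_iff_ge.mp hyb⟩
  have hdiag : Continuous fun r => (pos r, pos r) := continuous_pos.prodMk continuous_pos
  obtain ⟨a, ⟨haS, haT⟩, ha⟩ := LongRay.exists_gt_mem_inter_of_isClosed
    (isClosed_eq (hf.comp continuous_pos) hdiag) (isClosed_eq (hf.comp continuous_neg) hdiag)
    hS hT 0
  exact neg_ne_pos ha (hinj (haT.trans haS.symm))
end
end

section
/- The long ray R is not contractible; consequently, a constant map R → R′ is not homotopic to the canonical inclusion R ⊆ R′. -/
open Set Topology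
noncomputable section

/-- The extended long ray `R' = ({-1} × [0,1)) ⊔ R`: the long ray with an extra
initial open interval glued below, with the order topology. -/
def LongRay' : Type 1 := (ULift.{1} (Set.Ico (0:ℝ) 1)) ⊕ₗ LongRay

instance : LinearOrder LongRay' :=
  inferInstanceAs (LinearOrder ((ULift.{1} (Set.Ico (0:ℝ) 1)) ⊕ₗ LongRay))

instance : TopologicalSpace LongRay' := Preorder.topology LongRay'
instance : OrderTopology LongRay' := ⟨rfl⟩

/-- The canonical inclusion `R ⊆ R'`. -/
def LongRay.incl (x : LongRay) : LongRay' := toLex (Sum.inr x)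

/-! If `H : ℝ × X → Y` is continuous, the set of times `t` at which `H (t, ·)` is bounded above is
closed when every sequence in `Y` is bounded above, and open when moreover `X` is sequentially
compact: unbounded slices `H (tₙ, ·)` give points `xₙ` with `H (tₙ, xₙ)` above a fixed bound, and a
convergent subsequence of `xₙ` pushes `H (t, ·)` above it too. Both hypotheses hold for the long
ray, since a countable set of countable ordinals is bounded below `ω₁`, and a monotone subsequence
converges to its supremum or infimum. As `ℝ` is connected, no homotopy joins a constant map, which
is bounded, to the identity of `R` or to the inclusion `R ⊆ R′`, which are not. -/

open Filter

section SlicewiseBounded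

variable {T X Y : Type*} [TopologicalSpace T] [SequentialSpace T] [LinearOrder Y]
  [TopologicalSpace Y]

theorem isClosed_setOf_bddAbove_range_slice [ClosedIicTopology Y]
    (hY : ∀ g : ℕ → Y, BddAbove (range g)) {H : T × X → Y}
    (hH : ∀ x, Continuous fun t => H (t, x)) :
    IsClosed {t | BddAbove (range fun x => H (t, x))} := by
  refine IsSeqClosed.isClosed fun u t hu hut => ?_
  choose b hb using hu
  obtain ⟨B, hB⟩ := hY b
  refine ⟨B, forall_mem_range.2 fun x => le_of_tendsto ((hH x).tendsto t |>.comp hut) ?_⟩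
  exact Eventually.of_forall fun n => (hb n ⟨x, rfl⟩).trans (hB ⟨n, rfl⟩)

theorem isOpen_setOf_bddAbove_range_slice [TopologicalSpace X] [SeqCompactSpace X]
    [ClosedIciTopology Y] [NoMaxOrder Y] {H : T × X → Y} (hH : Continuous H) :
    IsOpen {t | BddAbove (range fun x => H (t, x))} := by
  refine isClosed_compl_iff.1 (IsSeqClosed.isClosed fun u t hu hut ⟨b, hb⟩ => ?_)
  obtain ⟨b', hbb'⟩ := exists_gt b
  have hunbdd (n : ℕ) : ∃ x, b' < H (u n, x) := by
    simpa only [exists_range_iff] using not_bddAbove_iff.1 (hu n) b'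
  choose x hx using hunbdd
  obtain ⟨l, φ, hφ, hl⟩ := SeqCompactSpace.tendsto_subseq x
  have hlim : Tendsto (fun n => H (u (φ n), x (φ n))) atTop (𝓝 (H (t, l))) :=
    (hH.tendsto _).comp ((hut.comp hφ.tendsto_atTop).prodMk_nhds hl)
  exact (hbb'.trans_le (ge_of_tendsto hlim (Eventually.of_forall fun n => (hx (φ n)).le))).not_ge
    (hb ⟨l, rfl⟩)

theorem bddAbove_range_slice_iff [PreconnectedSpace T] [TopologicalSpace X] [SeqCompactSpace X]
    [OrderClosedTopology Y] [NoMaxOrder Y] (hY : ∀ g : ℕ → Y, BddAbove (range g))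
    {H : T × X → Y} (hH : Continuous H) (s t : T) :
    BddAbove (range fun x => H (s, x)) ↔ BddAbove (range fun x => H (t, x)) := by
  have hclopen : IsClopen {t | BddAbove (range fun x => H (t, x))} :=
    ⟨isClosed_setOf_bddAbove_range_slice hY fun x => by fun_prop,
      isOpen_setOf_bddAbove_range_slice hH⟩
  rcases isClopen_iff.1 hclopen with h | h
  · exact iff_of_false (eq_empty_iff_forall_notMem.1 h s) (eq_empty_iff_forall_notMem.1 h t)
  · exact iff_of_true (eq_univ_iff_forall.1 h s) (eq_univ_iff_forall.1 h t)

end SlicewiseBounded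

theorem not_exists_homotopy_const_of_not_bddAbove {X Y : Type*} [TopologicalSpace X]
    [SeqCompactSpace X] [LinearOrder Y] [TopologicalSpace Y] [OrderClosedTopology Y] [NoMaxOrder Y]
    (hY : ∀ g : ℕ → Y, BddAbove (range g)) {f : X → Y} (hf : ¬ BddAbove (range f)) (c : Y) :
    ¬ ∃ H : ℝ × X → Y, Continuous H ∧ (∀ x, H (0, x) = c) ∧ (∀ x, H (1, x) = f x) := by
  rintro ⟨H, hH, h0, h1⟩
  have hconst : BddAbove (range fun x => H (0, x)) := ⟨c, forall_mem_range.2 fun x => (h0 x).le⟩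
  refine hf ?_
  simpa only [h1] using (bddAbove_range_slice_iff hY hH 0 1).1 hconst

theorem seqCompactSpace_of_exists_isGLB {X : Type*} [LinearOrder X] [TopologicalSpace X]
    [OrderTopology X] (hglb : ∀ s : Set X, s.Nonempty → ∃ l, IsGLB s l)
    (hbdd : ∀ f : ℕ → X, BddAbove (range f)) : SeqCompactSpace X := by
  refine ⟨fun x _ => ?_⟩
  obtain ⟨φ, hmono | hanti⟩ := exists_increasing_or_nonincreasing_subseq (· ≤ ·) x
  · have hmono : Monotone (x ∘ φ) := monotone_iff_forall_lt.2 hmono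
    obtain ⟨l, hl⟩ := hglb _ (hbdd (x ∘ φ))
    exact ⟨l, trivial, φ, φ.strictMono, tendsto_atTop_isLUB hmono (isGLB_upperBounds.1 hl)⟩
  · have hanti : Antitone (x ∘ φ) :=
      antitone_iff_forall_lt.2 fun m n hmn => (not_le.1 (hanti m n hmn)).le
    obtain ⟨l, hl⟩ := hglb _ (range_nonempty (x ∘ φ))
    exact ⟨l, trivial, φ, φ.strictMono, tendsto_atTop_isGLB hanti hl⟩

/-- The infimum sits over the least first coordinate met by `s`, at the infimum of that fibre. -/
theorem Prod.Lex.exists_isGLB {α β : Type*} [LinearOrder α] [WellFoundedLT α] [Preorder β]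
    (hβ : ∀ t : Set β, t.Nonempty → ∃ b, IsGLB t b) {s : Set (α ×ₗ β)} (hs : s.Nonempty) :
    ∃ l, IsGLB s l := by
  obtain ⟨a, ⟨p, hps, rfl⟩, hmin⟩ :=
    wellFounded_lt.has_min ((fun p => (ofLex p).1) '' s) (hs.image _)
  obtain ⟨b, hb⟩ := hβ {b | toLex ((ofLex p).1, b) ∈ s} ⟨(ofLex p).2, hps⟩
  refine ⟨toLex ((ofLex p).1, b), fun q hq => ?_, fun q hq => ?_⟩
  · rcases (not_lt.1 (hmin _ ⟨q, hq, rfl⟩)).lt_or_eq with h | h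
    · exact Prod.Lex.le_iff.2 (Or.inl h)
    · refine Prod.Lex.le_iff.2 (Or.inr ⟨h, hb.1 ?_⟩)
      change toLex (_, _) ∈ s
      rwa [show (ofLex p).1 = (ofLex q).1 from h]
  · rcases Prod.Lex.le_iff.1 (hq hps) with h | ⟨h, -⟩
    · exact Prod.Lex.le_iff.2 (Or.inl h)
    · refine Prod.Lex.le_iff.2 (Or.inr ⟨h, hb.2 fun c hc => ?_⟩)
      rcases Prod.Lex.le_iff.1 (hq hc) with h' | ⟨-, h'⟩
      · exact absurd h h'.ne
      · exact h'

theorem Set.Ico.exists_isGLB {α : Type*} [ConditionallyCompleteLinearOrder α] {a b : α}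
    {t : Set (Ico a b)} (ht : t.Nonempty) : ∃ c, IsGLB t c := by
  have hbdd : BddBelow (Subtype.val '' t) := ⟨a, forall_mem_image.2 fun x _ => x.2.1⟩
  have hlb : a ≤ sInf (Subtype.val '' t) :=
    le_csInf (ht.image _) (forall_mem_image.2 fun y _ => y.2.1)
  obtain ⟨x, hx⟩ := ht
  refine ⟨⟨_, hlb, (csInf_le hbdd (mem_image_of_mem _ hx)).trans_lt x.2.2⟩,
    fun y hy => Subtype.coe_le_coe.1 (csInf_le hbdd (mem_image_of_mem _ hy)),
    fun y hy => Subtype.coe_le_coe.1 (le_csInf ⟨_, mem_image_of_mem _ hx⟩ ?_)⟩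
  exact forall_mem_image.2 fun z hz => hy hz

namespace LongRay

theorem bddAbove_range (f : ℕ → LongRay) : BddAbove (range f) := by
  have hsucc (n : ℕ) : Order.succ (ofLex (f n)).1.1 < omega1 :=
    (Cardinal.isSuccLimit_omega 1).succ_lt (ofLex (f n)).1.2
  refine ⟨toLex (⟨⨆ n, Order.succ (ofLex (f n)).1.1, Ordinal.iSup_lt_omega_one hsucc⟩,
    ⟨0, left_mem_Ico.2 zero_lt_one⟩), forall_mem_range.2 fun n => Prod.Lex.le_iff.2 (Or.inl ?_)⟩
  exact (Order.lt_succ (ofLex (f n)).1.1).trans_le (le_ciSup Ordinal.bddAbove_of_small n)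

instance : SeqCompactSpace LongRay :=
  seqCompactSpace_of_exists_isGLB (fun _ => Prod.Lex.exists_isGLB fun _ => Set.Ico.exists_isGLB)
    bddAbove_range

instance : NoMaxOrder LongRay :=
  inferInstanceAs (NoMaxOrder ({o : Ordinal // o < omega1} ×ₗ (Set.Ico (0:ℝ) 1)))

theorem incl_strictMono : StrictMono incl := fun _ _ => Sum.Lex.inr_lt_inr_iff.2

end LongRay

namespace LongRay'

instance : NoMaxOrder LongRay' :=
  inferInstanceAs (NoMaxOrder (ULift.{1} (Set.Ico (0:ℝ) 1) ⊕ₗ LongRay))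

theorem exists_le_incl (z : LongRay') : ∃ x, z ≤ LongRay.incl x := by
  rcases z with u | x
  · exact ⟨0, Sum.Lex.inl_le_inr _ _⟩
  · exact ⟨x, le_rfl⟩

theorem bddAbove_range (f : ℕ → LongRay') : BddAbove (range f) := by
  choose g hg using fun n => exists_le_incl (f n)
  obtain ⟨b, hb⟩ := LongRay.bddAbove_range g
  exact ⟨LongRay.incl b, forall_mem_range.2 fun n =>
    (hg n).trans (LongRay.incl_strictMono.monotone (hb ⟨n, rfl⟩))⟩

theorem not_bddAbove_range_incl : ¬ BddAbove (range LongRay.incl) := by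
  refine not_bddAbove_iff.2 fun z => ?_
  obtain ⟨x, hx⟩ := exists_le_incl z
  obtain ⟨y, hy⟩ := exists_gt x
  exact ⟨LongRay.incl y, mem_range_self y, hx.trans_lt (LongRay.incl_strictMono hy)⟩

end LongRay'

/-- The long ray is not contractible; consequently no constant map `R → R'` is homotopic
to the canonical inclusion `R ⊆ R'`. -/
theorem longRay_not_contractible :
    ¬ ContractibleSpace LongRay ∧
    ∀ c : LongRay', ¬ ∃ H : ℝ × LongRay → LongRay', Continuous H ∧
      (∀ x, H (0, x) = c) ∧ (∀ x, H (1, x) = LongRay.incl x) := by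
  refine ⟨fun _ => ?_, not_exists_homotopy_const_of_not_bddAbove LongRay'.bddAbove_range
    LongRay'.not_bddAbove_range_incl⟩
  obtain ⟨y, ⟨G⟩⟩ := id_nullhomotopic LongRay
  refine not_exists_homotopy_const_of_not_bddAbove LongRay.bddAbove_range (f := id) (by simp) y
    ⟨fun p => G.symm (projIcc 0 1 zero_le_one p.1, p.2), by fun_prop, fun x => by simp,
      fun x => by simp⟩
end
end

section
/- Let f be a C¹ embedding R → R³ of the long ray with all three coordinate projections cofinal, and let (x_α)_{α<ω₁} be a decomposition as in the partition lemma (f(x_α) = (x_α,x_α,x_α) and f([x_α,x_{α+1}]) ⊆ [x_α,x_{α+1}]³). Then for all but finitely many α, there exists an index i ∈ {1,2,3} such that πᵢ∘f is monotone on [x_α, x_{α+1}]. -/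
open Set Topology
noncomputable section

/-!
Suppose infinitely many intervals `[x_α, x_{α+1}]` were bad, and let `β < ω₁` be the supremum
of an increasing `ω`-sequence of bad indices. By continuity of `(x_α)` at the limit `β`, the bad
intervals accumulate at `x_β` from below. Read `f` in a chart around `[0, x_β]`: the derivative of
the chart representation `F` at the image `L` of `x_β` has a nonzero coordinate `i`, so `F_i` is
strictly monotone on a neighbourhood of `L`. This neighbourhood contains the chart image of some
bad interval, on which `πᵢ ∘ f` is then monotone, because the chart is strictly increasing.
-/

open Filter

lemma longRay_zero_le (t : LongRay) : (0 : LongRay) ≤ t := by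
  refine (Prod.Lex.le_iff (x := (0 : LongRay)) (y := t)).mpr ?_
  rcases eq_or_lt_of_le (zero_le (a := (ofLex t).1.1)) with heq | hlt
  · exact Or.inr ⟨Subtype.ext heq, Subtype.coe_le_coe.mp (ofLex t).2.2.1⟩
  · exact Or.inl (Subtype.coe_lt_coe.mp hlt)

lemma Set.Infinite.exists_strictMono_seq {α : Type*} [LinearOrder α] [WellFoundedLT α]
    {s : Set α} (hs : s.Infinite) : ∃ g : ℕ → α, StrictMono g ∧ ∀ n, g n ∈ s := by
  have : Infinite s := hs.to_subtype
  obtain ⟨g, hg | hg⟩ := Infinite.exists_strictMono_or_strictAnti s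
  · exact ⟨fun n => g n, hg, fun n => (g n).2⟩
  · exact (not_strictAnti_of_wellFoundedLT g hg).elim

lemma tendsto_comp_of_isLUB {X : Type*} [LinearOrder X] [TopologicalSpace X] [OrderTopology X]
    {x : Ordinal → X} {β : Ordinal} (hx : MonotoneOn x (Iic β)) (hβ : IsLUB (x '' Iio β) (x β))
    {α : ℕ → Ordinal} (hα : Monotone α) (hαβ : IsLUB (range α) β) :
    Tendsto (x ∘ α) atTop (𝓝 (x β)) := by
  have hαle : ∀ n, α n ≤ β := fun n => hαβ.1 (mem_range_self n)
  refine tendsto_atTop_isLUB (fun m n hmn => hx (hαle m) (hαle n) (hα hmn)) ⟨?_, ?_⟩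
  · rintro _ ⟨n, rfl⟩
    exact hx (hαle n) self_mem_Iic (hαle n)
  · intro c hc
    refine hβ.2 ?_
    rintro _ ⟨γ, hγ, rfl⟩
    obtain ⟨_, ⟨n, rfl⟩, hγn⟩ := (lt_isLUB_iff hαβ).1 hγ
    exact (hx (mem_Iio.1 hγ).le (hαle n) hγn.le).trans (hc (mem_range_self n))

lemma Ordinal.lt_iSup_of_strictMono {α : ℕ → Ordinal} (hα : StrictMono α) (n : ℕ) :
    α n < ⨆ n, α n :=
  (hα n.lt_succ_self).trans_le (Ordinal.le_iSup α _)

lemma Ordinal.isSuccLimit_iSup_of_strictMono {α : ℕ → Ordinal} (hα : StrictMono α) :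
    Order.IsSuccLimit (⨆ n, α n) :=
  (isLUB_ciSup bddAbove_of_small).isSuccLimit_of_notMem (range_nonempty α)
    fun ⟨n, hn⟩ => (lt_iSup_of_strictMono hα n).ne hn

section Semiconj

variable {α β : Type*} [LinearOrder α] [Preorder β] {e : α → β} {g : α → α} {G : β → β}
  {s t : Set α}

lemma MonotoneOn.of_semiconj (he : StrictMonoOn e s) (hts : t ⊆ s) (hg : MapsTo g t s)
    (hconj : ∀ a ∈ t, G (e a) = e (g a)) (hG : MonotoneOn G (e '' t)) : MonotoneOn g t := by
  intro a ha b hb hab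
  rw [← he.le_iff_le (hg ha) (hg hb), ← hconj a ha, ← hconj b hb]
  exact hG (mem_image_of_mem e ha) (mem_image_of_mem e hb) (he.monotoneOn (hts ha) (hts hb) hab)

lemma AntitoneOn.of_semiconj (he : StrictMonoOn e s) (hts : t ⊆ s) (hg : MapsTo g t s)
    (hconj : ∀ a ∈ t, G (e a) = e (g a)) (hG : AntitoneOn G (e '' t)) : AntitoneOn g t := by
  intro a ha b hb hab
  rw [← he.le_iff_le (hg hb) (hg ha), ← hconj a ha, ← hconj b hb]
  exact hG (mem_image_of_mem e ha) (mem_image_of_mem e hb) (he.monotoneOn (hts ha) (hts hb) hab)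

end Semiconj

lemma exists_ball_strictMonoOn_or_strictAntiOn {G : ℝ → ℝ} (hG : ContDiff ℝ 1 G) {L : ℝ}
    (hL : deriv G L ≠ 0) :
    ∃ ε > 0, StrictMonoOn G (Metric.ball L ε) ∨ StrictAntiOn G (Metric.ball L ε) := by
  have hG' : Continuous (deriv G) := hG.continuous_deriv le_rfl
  rcases hL.lt_or_gt with hneg | hpos
  · obtain ⟨ε, hε, hball⟩ := Metric.isOpen_iff.1 (isOpen_lt hG' continuous_const) L hneg
    exact ⟨ε, hε, .inr <| strictAntiOn_of_deriv_neg (convex_ball L ε) hG.continuous.continuousOn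
      fun s hs => hball (interior_subset hs)⟩
  · obtain ⟨ε, hε, hball⟩ := Metric.isOpen_iff.1 (isOpen_lt continuous_const hG') L hpos
    exact ⟨ε, hε, .inl <| strictMonoOn_of_deriv_pos (convex_ball L ε) hG.continuous.continuousOn
      fun s hs => hball (interior_subset hs)⟩

lemma exists_coord_ball_strictMonoOn_or_strictAntiOn {ι : Type*} [Fintype ι]
    {F : ℝ → ι → ℝ} (hF : ContDiff ℝ 1 F) {L : ℝ} (hL : deriv F L ≠ 0) :
    ∃ i, ∃ ε > 0, StrictMonoOn (F · i) (Metric.ball L ε) ∨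
      StrictAntiOn (F · i) (Metric.ball L ε) := by
  have hFi : ∀ i, ContDiff ℝ 1 (F · i) := contDiff_pi.1 hF
  rw [deriv_pi fun i => (hFi i).differentiable one_ne_zero L] at hL
  obtain ⟨i, hi⟩ := Function.ne_iff.1 hL
  exact ⟨i, exists_ball_strictMonoOn_or_strictAntiOn (hFi i) hi⟩

lemma monotoneOn_or_antitoneOn_of_chart {f : LongRay → Fin 3 → LongRay} {e : LongRay → ℝ}
    {F : ℝ → Fin 3 → ℝ} {z p q : LongRay} {i : Fin 3} (he : StrictMonoOn e (Icc 0 z))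
    (hchart : ∀ t ∈ Icc 0 z, (∀ i, f t i ∈ Icc 0 z) → ∀ i, F (e t) i = e (f t i))
    (hqz : q ≤ z) (hmaps : ∀ t ∈ Icc p q, ∀ i, f t i ∈ Icc p q)
    (hF : MonotoneOn (F · i) (Icc (e p) (e q)) ∨ AntitoneOn (F · i) (Icc (e p) (e q))) :
    MonotoneOn (f · i) (Icc p q) ∨ AntitoneOn (f · i) (Icc p q) := by
  have hsub : Icc p q ⊆ Icc 0 z := fun t ht => ⟨longRay_zero_le t, ht.2.trans hqz⟩
  have himage : e '' Icc p q ⊆ Icc (e p) (e q) := by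
    rintro _ ⟨t, ht, rfl⟩
    exact ⟨he.monotoneOn (hsub (left_mem_Icc.2 (ht.1.trans ht.2))) (hsub ht) ht.1,
      he.monotoneOn (hsub ht) (hsub (right_mem_Icc.2 (ht.1.trans ht.2))) ht.2⟩
  have hconj : ∀ t ∈ Icc p q, F (e t) i = e (f t i) :=
    fun t ht => hchart t (hsub ht) (fun j => hsub (hmaps t ht j)) i
  have hmaps' : MapsTo (f · i) (Icc p q) (Icc 0 z) := fun t ht => hsub (hmaps t ht i)
  exact hF.imp (fun h => (h.mono himage).of_semiconj he hsub hmaps' hconj)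
    (fun h => (h.mono himage).of_semiconj he hsub hmaps' hconj)

theorem eventually_some_coordinate_monotone_general
    (f : LongRay → Fin 3 → LongRay)
    (x : Ordinal → LongRay)
    (hmono : ∀ α β, α < β → β < omega1 → x α < x β)
    (hlim : ∀ β, β < omega1 → Order.IsSuccLimit β → IsLUB (x '' {α | α < β}) (x β))
    (hcube : ∀ α, 0 < α → α < omega1 →
      ∀ t ∈ Set.Icc (x α) (x (α + 1)), ∀ i, f t i ∈ Set.Icc (x α) (x (α + 1)))
    (hC1 : ∀ z : LongRay, ∃ (e : LongRay → ℝ) (F : ℝ → Fin 3 → ℝ),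
      StrictMonoOn e (Set.Icc 0 z) ∧ ContinuousOn e (Set.Icc 0 z) ∧
      ContDiff ℝ 1 F ∧ (∀ t : ℝ, deriv F t ≠ 0) ∧
      ∀ t ∈ Set.Icc 0 z, (∀ i, f t i ∈ Set.Icc 0 z) → ∀ i, F (e t) i = e (f t i)) :
    {α : Ordinal | 0 < α ∧ α < omega1 ∧
      ¬ ∃ i : Fin 3, MonotoneOn (fun t => f t i) (Set.Icc (x α) (x (α + 1))) ∨
          AntitoneOn (fun t => f t i) (Set.Icc (x α) (x (α + 1)))}.Finite := by
  by_contra hinf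
  obtain ⟨α, hα, hbad⟩ := Set.Infinite.exists_strictMono_seq hinf
  set β := ⨆ n, α n
  have hβ_lub : IsLUB (range α) β := isLUB_ciSup Ordinal.bddAbove_of_small
  have hβ_lt : β < omega1 := Ordinal.iSup_lt_omega_one fun n => (hbad n).2.1
  have hαβ : ∀ n, α n < β := Ordinal.lt_iSup_of_strictMono hα
  have hx : MonotoneOn x (Iic β) := fun a _ b hb hab =>
    hab.eq_or_lt.elim (fun h => h ▸ le_rfl) fun h => (hmono a b h (hb.trans_lt hβ_lt)).le
  have hxα : Tendsto (x ∘ α) atTop (𝓝 (x β)) :=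
    tendsto_comp_of_isLUB hx (hlim β hβ_lt (Ordinal.isSuccLimit_iSup_of_strictMono hα))
      hα.monotone hβ_lub
  obtain ⟨e, F, he, he_cont, hF, hF', hchart⟩ := hC1 (x β)
  obtain ⟨i, ε, hε, hFi⟩ := exists_coord_ball_strictMonoOn_or_strictAntiOn hF (hF' (e (x β)))
  have hexα : Tendsto (e ∘ x ∘ α) atTop (𝓝 (e (x β))) :=
    (he_cont _ ⟨longRay_zero_le _, le_rfl⟩).tendsto.comp <| tendsto_nhdsWithin_iff.2
      ⟨hxα, .of_forall fun n => ⟨longRay_zero_le _, hx (hαβ n).le self_mem_Iic (hαβ n).le⟩⟩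
  obtain ⟨n, hn⟩ : ∃ n, e (x β) - ε < e (x (α n)) :=
    (hexα.eventually (eventually_gt_nhds (sub_lt_self _ hε))).exists
  have hsucc : x (α n + 1) ≤ x β :=
    hx (Order.succ_le_of_lt (hαβ n)) self_mem_Iic (Order.succ_le_of_lt (hαβ n))
  have hball : Icc (e (x (α n))) (e (x (α n + 1))) ⊆ Metric.ball (e (x β)) ε := by
    have : e (x (α n + 1)) ≤ e (x β) :=
      he.monotoneOn ⟨longRay_zero_le _, hsucc⟩ ⟨longRay_zero_le _, le_rfl⟩ hsucc
    rw [Real.ball_eq_Ioo]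
    exact Icc_subset_Ioo hn (this.trans_lt (lt_add_of_pos_right _ hε))
  refine (hbad n).2.2 ⟨i, monotoneOn_or_antitoneOn_of_chart he hchart hsucc
    (hcube _ (hbad n).1 (hbad n).2.1) ?_⟩
  exact hFi.imp (fun h => h.monotoneOn.mono hball) (fun h => h.antitoneOn.mono hball)

/-- Let `f` be a C¹ embedding `R → R³` with all three coordinate projections cofinal, and
`(x_α)` a decomposition as in the partition lemma (`f(x_α)` on the diagonal,
`f([x_α,x_{α+1}]) ⊆ [x_α,x_{α+1}]³`). The C¹ hypothesis is expressed in charts: on each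
initial segment `[0,z]`, `f` is represented by a C¹ immersion `F : ℝ → ℝ³` through a
strictly monotone continuous chart `e`. Then for all but finitely many `α` some coordinate
`πᵢ ∘ f` is monotone on `[x_α, x_{α+1}]`. -/
theorem eventually_some_coordinate_monotone
    (f : LongRay → Fin 3 → LongRay) (hf : Topology.IsEmbedding f)
    (hcof : ∀ i : Fin 3, Cofinal fun t => f t i)
    (x : Ordinal → LongRay)
    (hmono : ∀ α β, α < β → β < omega1 → x α < x β)
    (hlim : ∀ β, β < omega1 → Order.IsSuccLimit β → IsLUB (x '' {α | α < β}) (x β))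
    (hdiag : ∀ α, 0 < α → α < omega1 → ∀ i, f (x α) i = x α)
    (hcube : ∀ α, 0 < α → α < omega1 →
      ∀ t ∈ Set.Icc (x α) (x (α + 1)), ∀ i, f t i ∈ Set.Icc (x α) (x (α + 1)))
    (hC1 : ∀ z : LongRay, ∃ (e : LongRay → ℝ) (F : ℝ → Fin 3 → ℝ),
      StrictMonoOn e (Set.Icc 0 z) ∧ ContinuousOn e (Set.Icc 0 z) ∧
      ContDiff ℝ 1 F ∧ (∀ t : ℝ, deriv F t ≠ 0) ∧
      ∀ t ∈ Set.Icc 0 z, (∀ i, f t i ∈ Set.Icc 0 z) → ∀ i, F (e t) i = e (f t i)) :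
    {α : Ordinal | 0 < α ∧ α < omega1 ∧
      ¬ ∃ i : Fin 3, MonotoneOn (fun t => f t i) (Set.Icc (x α) (x (α + 1))) ∨
          AntitoneOn (fun t => f t i) (Set.Icc (x α) (x (α + 1)))}.Finite :=
  eventually_some_coordinate_monotone_general f x hmono hlim hcube hC1
end
end
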